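/- Let A be a commutative monoid, X, Y, Z topological spaces, f : Z → X a continuous surjection with finite fibers such that every point of X has an open neighborhood U such that f⁻¹(U) is a finite disjoint union of opens each mapped homeomorphically onto U. Let g : Z → Y be continuous, d : Z → ℕ locally constant, and a : Y → A locally constant. Then the function X → A, x ↦ Σ_{z ∈ f⁻¹(x)} d(z) · a(g(z)), is locally constant. -/
import Mathlib


open scoped BigOperators

/-- Transfer along a finite locally trivial covering: if `f : Z → X` is a continuous
surjection with finite fibers which is locally (over `X`) a finite disjoint union of
homeomorphic copies, `g : Z → Y` continuous, `d : Z → ℕ` and `a : Y → A` locally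
constant (`A` a commutative monoid), then `x ↦ ∑_{z ∈ f⁻¹(x)} d(z) • a(g(z))` is
locally constant. -/
theorem transfer_locallyConstant
    {A X Y Z : Type*} [AddCommMonoid A]
    [TopologicalSpace X] [TopologicalSpace Y] [TopologicalSpace Z]
    (f : Z → X) (hf : Continuous f) (hsurj : Function.Surjective f)
    (hfib : ∀ x : X, (f ⁻¹' {x}).Finite)
    (hloc : ∀ x : X, ∃ U : Set X, IsOpen U ∧ x ∈ U ∧
      ∃ (ι : Type) (_ : Fintype ι) (V : ι → Set Z),
        (∀ i, IsOpen (V i)) ∧ (f ⁻¹' U = ⋃ i, V i) ∧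
        (Pairwise (Function.onFun Disjoint V)) ∧
        ∀ i, ∃ e : (V i) ≃ₜ U, ∀ z : V i, (e z : X) = f (z : Z))
    (g : Z → Y) (hg : Continuous g)
    (d : Z → ℕ) (hd : IsLocallyConstant d)
    (a : Y → A) (ha : IsLocallyConstant a) :
    IsLocallyConstant (fun x : X => ∑ z ∈ (hfib x).toFinset, d z • a (g z)) := by
  set φ : Z → A := fun z => d z • a (g z) with hφdef
  have hφ : IsLocallyConstant φ := hd.comp₂ (ha.comp_continuous hg) (· • ·)
  rw [IsLocallyConstant.iff_exists_open]
  intro x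
  classical
  obtain ⟨U, hU, hxU, ι, _, V, hVopen, hVcover, hVdisj, hVe⟩ := hloc x
  choose e he using hVe
  -- the pulled back functions on U
  set ψ : ι → U → A := fun i u => φ ((e i).symm u : Z) with hψdef
  have hψ : ∀ i, IsLocallyConstant (ψ i) := fun i =>
    hφ.comp_continuous (continuous_subtype_val.comp (e i).symm.continuous)
  -- choose opens where ψ i is constant near x
  have hOi : ∀ i : ι, ∃ O : Set X, IsOpen O ∧ x ∈ O ∧
      ∀ y : U, (y : X) ∈ O → ψ i y = ψ i ⟨x, hxU⟩ := by
    intro i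
    obtain ⟨W, hWopen, hxW, hWconst⟩ := (hψ i).exists_open ⟨x, hxU⟩
    obtain ⟨O, hOopen, hOW⟩ := isOpen_induced_iff.mp hWopen
    refine ⟨O, hOopen, by rw [← hOW] at hxW; exact hxW, fun y hy => ?_⟩
    exact hWconst y (by rw [← hOW]; exact hy)
  choose O hOopen hxO hOconst using hOi
  refine ⟨U ∩ ⋂ i, O i, hU.inter (isOpen_iInter_of_finite hOopen),
    ⟨hxU, Set.mem_iInter.mpr hxO⟩, ?_⟩
  -- key computation: for y ∈ U, the fiber sum is ∑ i, ψ i y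
  have key : ∀ (y : X) (hyU : y ∈ U),
      ∑ z ∈ (hfib y).toFinset, φ z = ∑ i : ι, ψ i ⟨y, hyU⟩ := by
    intro y hyU
    set F : ι → Z := fun i => ((e i).symm ⟨y, hyU⟩ : Z) with hFdef
    have hFmem : ∀ i, (F i : Z) ∈ V i := fun i => ((e i).symm ⟨y, hyU⟩).2
    have hFfib : ∀ i, f (F i) = y := by
      intro i
      have := he i ((e i).symm ⟨y, hyU⟩)
      rw [(e i).apply_symm_apply] at this
      exact this.symm
    have hFinj : Function.Injective F := by
      intro i j hij
      by_contra hne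
      exact Set.disjoint_left.mp (hVdisj hne) (hFmem i) (hij ▸ hFmem j)
    have hset : (hfib y).toFinset = Finset.univ.image F := by
      ext z
      simp only [Set.Finite.mem_toFinset, Set.mem_preimage, Set.mem_singleton_iff,
        Finset.mem_image, Finset.mem_univ, true_and]
      constructor
      · intro hz
        have hzU : z ∈ f ⁻¹' U := by simp [hz, hyU]
        rw [hVcover] at hzU
        obtain ⟨i, hi⟩ := Set.mem_iUnion.mp hzU
        refine ⟨i, ?_⟩
        have : e i ⟨z, hi⟩ = ⟨y, hyU⟩ := Subtype.ext (by exact (he i ⟨z, hi⟩).trans hz)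
        have := congrArg (e i).symm this
        rw [(e i).symm_apply_apply] at this
        exact congrArg Subtype.val this.symm
      · rintro ⟨i, rfl⟩
        exact hFfib i
    rw [hset, Finset.sum_image (fun i _ j _ h => hFinj h)]
  intro y hy
  obtain ⟨hyU, hyO⟩ := hy
  rw [key y hyU, key x hxU]
  refine Finset.sum_congr rfl fun i _ => ?_
  exact hOconst i ⟨y, hyU⟩ (Set.mem_iInter.mp hyO i)
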